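/- arXiv:2412.08535 — 5 statements merged into one kernel-verified Lean document; each statement's English description precedes it below -/
import Mathlib

section
/- Let c, μ > 0 and let p : ℝ → ℝ be continuous, differentiable on (a, ∞) with z ↦ p(z) p'(z) differentiable on (a, ∞), satisfying −c p'(z) − μ (p(z) p'(z))' = 0 for all z ∈ (a, ∞), together with p(z) → 0 and p(z) p'(z) → 0 as z → ∞. Then c p(z) + μ p(z) p'(z) = 0 for all z ∈ (a, ∞); in particular p'(z) = −c/μ at every z ∈ (a, ∞) where p(z) > 0. Moreover, if p > 0 on an interval (a, b) and p(b) = 0, then p(z) = (c/μ)(b − z) for all z ∈ (a, b). -/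
open Set Filter Topology

/-!
The flux `c p + μ p p'` has derivative `c p' + μ (p p')' = 0` on `(a, ∞)`, so it is constant
there, and the constant is its limit `0` at `+∞`. Dividing by `μ p` where `p > 0` gives
`p' = -c/μ`, and the mean value theorem on `[z, b]` integrates this slope from `p b = 0`.
-/

theorem eq_of_deriv_eq_zero_of_tendsto_atTop {G : Type*} [NormedAddCommGroup G]
    [NormedSpace ℝ G] {f : ℝ → G} {a : ℝ} {L : G} (hf : DifferentiableOn ℝ f (Ioi a))
    (hf' : EqOn (deriv f) 0 (Ioi a)) (hlim : Tendsto f atTop (𝓝 L)) {z : ℝ} (hz : z ∈ Ioi a) :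
    f z = L := by
  have hconst : ∀ᶠ y in atTop, f z = f y :=
    eventually_of_mem (Ioi_mem_atTop a) fun y hy =>
      isOpen_Ioi.is_const_of_deriv_eq_zero isPreconnected_Ioi hf hf' hz hy
  exact tendsto_nhds_unique (tendsto_const_nhds.congr' hconst) hlim

theorem sub_eq_mul_sub_of_deriv_eq_const {f : ℝ → ℝ} {x y m : ℝ} (hxy : x < y)
    (hfc : ContinuousOn f (Icc x y)) (hfd : DifferentiableOn ℝ f (Ioo x y))
    (hf' : ∀ w ∈ Ioo x y, deriv f w = m) : f y - f x = m * (y - x) := by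
  obtain ⟨ξ, hξ, hslope⟩ := exists_deriv_eq_slope f hxy hfc hfd
  rw [hf' ξ hξ] at hslope
  field_simp [sub_ne_zero.2 hxy.ne'] at hslope
  linarith

theorem flux_eq_zero_of_travelling_wave {c μ a : ℝ} {p : ℝ → ℝ}
    (hpd : ∀ z ∈ Ioi a, DifferentiableAt ℝ p z)
    (hud : ∀ z ∈ Ioi a, DifferentiableAt ℝ (fun w => p w * deriv p w) z)
    (heq : ∀ z ∈ Ioi a, -c * deriv p z - μ * deriv (fun w => p w * deriv p w) z = 0)
    (hp0 : Tendsto p atTop (𝓝 0))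
    (hpp0 : Tendsto (fun z => p z * deriv p z) atTop (𝓝 0)) {z : ℝ} (hz : z ∈ Ioi a) :
    c * p z + μ * p z * deriv p z = 0 := by
  have hflux_deriv : ∀ x ∈ Ioi a,
      HasDerivAt (fun w => c * p w + μ * (p w * deriv p w)) 0 x := by
    intro x hx
    have h := ((hpd x hx).hasDerivAt.const_mul c).add ((hud x hx).hasDerivAt.const_mul μ)
    rwa [show c * deriv p x + μ * deriv (fun w => p w * deriv p w) x = 0 by linarith [heq x hx]]
      at h
  have hlim : Tendsto (fun w => c * p w + μ * (p w * deriv p w)) atTop (𝓝 0) := by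
    simpa using (hp0.const_mul c).add (hpp0.const_mul μ)
  rw [mul_assoc]
  exact eq_of_deriv_eq_zero_of_tendsto_atTop
    (fun x hx => (hflux_deriv x hx).differentiableAt.differentiableWithinAt)
    (fun x hx => (hflux_deriv x hx).deriv) hlim hz

theorem stmt1_general
    (c μ : ℝ) (hμ : 0 < μ)
    (a : ℝ) (p : ℝ → ℝ)
    (hpd : ∀ z ∈ Ioi a, DifferentiableAt ℝ p z)
    (hud : ∀ z ∈ Ioi a, DifferentiableAt ℝ (fun w => p w * deriv p w) z)
    (heq : ∀ z ∈ Ioi a,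
      -c * deriv p z - μ * deriv (fun w => p w * deriv p w) z = 0)
    (hp0 : Tendsto p atTop (𝓝 0))
    (hpp0 : Tendsto (fun z => p z * deriv p z) atTop (𝓝 0)) :
    (∀ z ∈ Ioi a, c * p z + μ * p z * deriv p z = 0) ∧
    (∀ z ∈ Ioi a, 0 < p z → deriv p z = -(c / μ)) ∧
    (∀ b, a < b → (∀ z ∈ Ioo a b, 0 < p z) → p b = 0 →
      ∀ z ∈ Ioo a b, p z = c / μ * (b - z)) := by
  have hflux : ∀ z ∈ Ioi a, c * p z + μ * p z * deriv p z = 0 := fun z hz =>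
    flux_eq_zero_of_travelling_wave hpd hud heq hp0 hpp0 hz
  have hslope : ∀ z ∈ Ioi a, 0 < p z → deriv p z = -(c / μ) := by
    intro z hz hpz
    have h := hflux z hz
    field_simp
    nlinarith
  refine ⟨hflux, hslope, fun b _ hpos hpb z hz => ?_⟩
  have hsub : Icc z b ⊆ Ioi a := fun x hx => hz.1.trans_le hx.1
  have hlinear := sub_eq_mul_sub_of_deriv_eq_const hz.2
    (fun x hx => (hpd x (hsub hx)).continuousAt.continuousWithinAt)
    (fun x hx => (hpd x (hsub (Ioo_subset_Icc_self hx))).differentiableWithinAt)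
    (fun x hx => hslope x (hz.1.trans hx.1) (hpos x ⟨hz.1.trans hx.1, hx.2⟩))
  rw [hpb] at hlinear
  linarith

/-- If `p` is continuous, solves `−c p' − μ (p p')' = 0` on `(a, ∞)`,
and `p → 0`, `p p' → 0` at `+∞`, then `c p + μ p p' = 0` on `(a, ∞)`; in particular
`p' = −c/μ` wherever `p > 0`, and if `p > 0` on `(a, b)` with `p(b) = 0` then
`p(z) = (c/μ)(b − z)` on `(a, b)`. -/
theorem stmt1
    (c μ : ℝ) (hc : 0 < c) (hμ : 0 < μ)
    (a : ℝ) (p : ℝ → ℝ)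
    (hpc : Continuous p)
    (hpd : ∀ z ∈ Ioi a, DifferentiableAt ℝ p z)
    (hud : ∀ z ∈ Ioi a, DifferentiableAt ℝ (fun w => p w * deriv p w) z)
    (heq : ∀ z ∈ Ioi a,
      -c * deriv p z - μ * deriv (fun w => p w * deriv p w) z = 0)
    (hp0 : Tendsto p atTop (𝓝 0))
    (hpp0 : Tendsto (fun z => p z * deriv p z) atTop (𝓝 0)) :
    (∀ z ∈ Ioi a, c * p z + μ * p z * deriv p z = 0) ∧
    (∀ z ∈ Ioi a, 0 < p z → deriv p z = -(c / μ)) ∧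
    (∀ b, a < b → (∀ z ∈ Ioo a b, 0 < p z) → p b = 0 →
      ∀ z ∈ Ioo a b, p z = c / μ * (b - z)) :=
  stmt1_general c μ hμ a p hpd hud heq hp0 hpp0
end

section
/- Let c ≥ 0, μ > 0, let a < b be real numbers, and let p : (a, b) → ℝ be nonnegative, bounded, differentiable with p' ≤ 0 on (a, b) and with z ↦ μ p(z) p'(z) differentiable on (a, b). Suppose −c p'(z) − μ (p(z) p'(z))'(z) = h(z) on (a, b), where h : (a, b) → ℝ is nonnegative and bounded. Then for every z* ∈ (a, b) the function z ↦ μ p(z) (p'(z))² is (improperly) integrable on (z*, b), i.e. ∫_{z*}^{b} μ p(z) (p'(z))² dz < ∞. -/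
/-!
Multiplying the equation by `p`: with `K = (sup p) (sup h)`, the energy
`E z = p z · μ p z p' z + K z` satisfies `E' = μ p p'² - c p p' + (K - p h) ≥ μ p p'² ≥ 0`,
while `E ≤ K b` because `μ p² p' ≤ 0`. Being nondecreasing and bounded, `E` has a limit at `b`,
so its derivative, which dominates the integrand, is integrable up to `b`.
-/

open Set MeasureTheory Filter Topology

theorem integrableOn_Ioc_deriv_of_nonneg_of_tendsto {G G' : ℝ → ℝ} {x b L : ℝ}
    (hcont : ContinuousWithinAt G (Ici x) x) (hderiv : ∀ y ∈ Ioo x b, HasDerivAt G (G' y) y)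
    (hpos : ∀ y ∈ Ioo x b, 0 ≤ G' y) (hlim : Tendsto G (𝓝[<] b) (𝓝 L)) :
    IntegrableOn G' (Ioc x b) := by
  classical
  have hGcont : ContinuousOn G (Ico x b) := by
    intro y hy
    rcases hy.1.eq_or_lt with rfl | hxy
    · exact hcont.mono Ico_subset_Ici_self
    · exact (hderiv y ⟨hxy, hy.2⟩).continuousAt.continuousWithinAt
  refine intervalIntegral.integrableOn_deriv_of_nonneg (g := Function.update G b L) ?_
    (fun y hy => (hderiv y hy).congr_of_eventuallyEq ?_) hpos
  · rw [continuousOn_update_iff, Icc_sdiff_right]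
    exact ⟨hGcont, fun _ => hlim.mono_left (nhdsWithin_mono _ fun y hy => hy.2)⟩
  · filter_upwards [isOpen_ne.mem_nhds hy.2.ne] with z hz using Function.update_of_ne hz _ _

theorem integrableOn_Ioc_deriv_of_nonneg_of_bddAbove {G G' : ℝ → ℝ} {x b : ℝ} (hxb : x < b)
    (hcont : ContinuousWithinAt G (Ici x) x) (hderiv : ∀ y ∈ Ioo x b, HasDerivAt G (G' y) y)
    (hpos : ∀ y ∈ Ioo x b, 0 ≤ G' y) (hbdd : BddAbove (G '' Ioo x b)) :
    IntegrableOn G' (Ioc x b) := by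
  have hmono : MonotoneOn G (Ioo x b) :=
    monotoneOn_of_hasDerivWithinAt_nonneg (convex_Ioo x b)
      (fun y hy => (hderiv y hy).continuousAt.continuousWithinAt)
      (fun y hy => (hderiv y (interior_subset hy)).hasDerivWithinAt)
      (fun y hy => hpos y (interior_subset hy))
  exact integrableOn_Ioc_deriv_of_nonneg_of_tendsto hcont hderiv hpos
    (hmono.tendsto_nhdsWithin_Ioo_left (nonempty_Ioo.2 hxb) hbdd)

theorem hasDerivAt_energy {c μ K z : ℝ} {p h : ℝ → ℝ} (hpd : DifferentiableAt ℝ p z)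
    (hud : DifferentiableAt ℝ (fun w => μ * p w * deriv p w) z)
    (heq : -c * deriv p z - deriv (fun w => μ * p w * deriv p w) z = h z) :
    HasDerivAt (fun w => p w * (μ * p w * deriv p w) + K * w)
      (μ * p z * deriv p z ^ 2 - p z * (c * deriv p z + h z) + K) z := by
  have hflux : deriv (fun w => μ * p w * deriv p w) z = -(c * deriv p z + h z) := by linarith
  refine ((hpd.hasDerivAt.mul hud.hasDerivAt).add ((hasDerivAt_id z).const_mul K)).congr_deriv ?_
  simp only [hflux]
  ring

theorem mul_sq_le_energy_deriv {c μ P D H Cp Ch : ℝ} (hc : 0 ≤ c) (hP : 0 ≤ P) (hPC : P ≤ Cp)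
    (hD : D ≤ 0) (hH : 0 ≤ H) (hHC : H ≤ Ch) :
    μ * P * D ^ 2 ≤ μ * P * D ^ 2 - P * (c * D + H) + Cp * Ch := by
  nlinarith [mul_le_mul hPC hHC hH (hP.trans hPC), mul_nonneg (mul_nonneg hc hP) (neg_nonneg.2 hD)]

theorem energy_le {μ K P D z b : ℝ} (hμ : 0 ≤ μ) (hK : 0 ≤ K) (hD : D ≤ 0) (hzb : z ≤ b) :
    P * (μ * P * D) + K * z ≤ K * b := by
  nlinarith [mul_nonneg (mul_nonneg hμ (mul_self_nonneg P)) (neg_nonneg.2 hD)]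

theorem stmt3_general
    (c μ : ℝ) (hc : 0 ≤ c) (hμ : 0 < μ)
    (a b : ℝ)
    (p h : ℝ → ℝ)
    (hpnn : ∀ z ∈ Ioo a b, 0 ≤ p z)
    (hpbd : ∃ C : ℝ, ∀ z ∈ Ioo a b, p z ≤ C)
    (hpd : ∀ z ∈ Ioo a b, DifferentiableAt ℝ p z)
    (hp' : ∀ z ∈ Ioo a b, deriv p z ≤ 0)
    (hud : ∀ z ∈ Ioo a b, DifferentiableAt ℝ (fun w => μ * p w * deriv p w) z)
    (heq : ∀ z ∈ Ioo a b,
      -c * deriv p z - deriv (fun w => μ * p w * deriv p w) z = h z)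
    (hhnn : ∀ z ∈ Ioo a b, 0 ≤ h z)
    (hhbd : ∃ C : ℝ, ∀ z ∈ Ioo a b, h z ≤ C) :
    ∀ zs ∈ Ioo a b,
      IntegrableOn (fun z => μ * p z * (deriv p z) ^ 2) (Ioo zs b) := by
  intro zs hzs
  obtain ⟨Cp, hCp⟩ := hpbd
  obtain ⟨Ch, hCh⟩ := hhbd
  have hsub : Ioo zs b ⊆ Ioo a b := Ioo_subset_Ioo_left hzs.1.le
  have hK : 0 ≤ Cp * Ch :=
    mul_nonneg ((hpnn zs hzs).trans (hCp zs hzs)) ((hhnn zs hzs).trans (hCh zs hzs))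
  have hE := fun z hz => hasDerivAt_energy (K := Cp * Ch) (hpd z hz) (hud z hz) (heq z hz)
  have hnonneg : ∀ z ∈ Ioo zs b, 0 ≤ μ * p z * deriv p z ^ 2 := fun z hz => by
    have := hpnn z (hsub hz); positivity
  have hdom := fun z (hz : z ∈ Ioo zs b) => mul_sq_le_energy_deriv (μ := μ) hc
    (hpnn z (hsub hz)) (hCp z (hsub hz)) (hp' z (hsub hz)) (hhnn z (hsub hz)) (hCh z (hsub hz))
  have hbdd : BddAbove ((fun w => p w * (μ * p w * deriv p w) + Cp * Ch * w) '' Ioo zs b) :=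
    ⟨Cp * Ch * b, by
      rintro _ ⟨z, hz, rfl⟩
      exact energy_le hμ.le hK (hp' z (hsub hz)) hz.2.le⟩
  have hint := integrableOn_Ioc_deriv_of_nonneg_of_bddAbove hzs.2
    (hE zs hzs).continuousAt.continuousWithinAt (fun z hz => hE z (hsub hz))
    (fun z hz => (hnonneg z hz).trans (hdom z hz)) hbdd
  have hmeas : AEStronglyMeasurable (fun z => μ * p z * deriv p z ^ 2)
      (volume.restrict (Ioo zs b)) :=
    ((aemeasurable_const.mul (ContinuousOn.aemeasurable (fun z hz =>
      (hpd z (hsub hz)).continuousAt.continuousWithinAt) measurableSet_Ioo)).mul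
      ((measurable_deriv p).aemeasurable.pow_const 2)).aestronglyMeasurable
  exact (hint.mono_set Ioo_subset_Ioc_self).mono' hmeas ((ae_restrict_mem measurableSet_Ioo).mono
    fun z hz => (Real.norm_of_nonneg (hnonneg z hz)).trans_le (hdom z hz))

/-- Local energy estimate: if `p` is nonnegative, bounded,
differentiable with `p' ≤ 0` on `(a, b)` and solves
`−c p' − μ (p p')' = h` with `h ≥ 0` bounded, then the weighted energy
`μ p (p')²` is integrable on `(z*, b)` for every `z* ∈ (a, b)`. -/
theorem stmt3
    (c μ : ℝ) (hc : 0 ≤ c) (hμ : 0 < μ)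
    (a b : ℝ) (hab : a < b)
    (p h : ℝ → ℝ)
    (hpnn : ∀ z ∈ Ioo a b, 0 ≤ p z)
    (hpbd : ∃ C : ℝ, ∀ z ∈ Ioo a b, p z ≤ C)
    (hpd : ∀ z ∈ Ioo a b, DifferentiableAt ℝ p z)
    (hp' : ∀ z ∈ Ioo a b, deriv p z ≤ 0)
    (hud : ∀ z ∈ Ioo a b, DifferentiableAt ℝ (fun w => μ * p w * deriv p w) z)
    (heq : ∀ z ∈ Ioo a b,
      -c * deriv p z - deriv (fun w => μ * p w * deriv p w) z = h z)
    (hhnn : ∀ z ∈ Ioo a b, 0 ≤ h z)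
    (hhbd : ∃ C : ℝ, ∀ z ∈ Ioo a b, h z ≤ C) :
    ∀ zs ∈ Ioo a b,
      IntegrableOn (fun z => μ * p z * (deriv p z) ^ 2) (Ioo zs b) :=
  stmt3_general c μ hc hμ a b p h hpnn hpbd hpd hp' hud heq hhnn hhbd
end

section
/- Let c ∈ ℝ, μ⁻, μ⁺ > 0, let a < z_j < b, and let p : (a, b) → ℝ be continuous, differentiable on (a, z_j) and on (z_j, b), with finite one-sided derivative limits p'(z_j^−) := lim_{z→z_j^−} p'(z) and p'(z_j^+) := lim_{z→z_j^+} p'(z). Let h : (a, b) → ℝ be integrable, let K ∈ ℝ, and define F(z) := c p(z) + μ⁻ p(z) p'(z) for z ∈ (a, z_j) and F(z) := c p(z) + μ⁺ p(z) p'(z) for z ∈ (z_j, b). If F(z) = K + ∫_z^b h(ζ) dζ for all z ∈ (a, b) with z ≠ z_j, and if p(z_j) ≠ 0, then μ⁺ p'(z_j^+) = μ⁻ p'(z_j^−). -/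
open Set Filter Topology MeasureTheory

/-- Flux continuity across an interface: if the shifted flux
`F = c p + μ^± p p'` (with mobility `μ⁻` on the left of `z_j` and `μ⁺` on the
right) equals `K + ∫_z^b h` on `(a, b) \ {z_j}`, and `p(z_j) ≠ 0`, then
`μ⁺ p'(z_j⁺) = μ⁻ p'(z_j⁻)`. -/
theorem stmt5
    (c : ℝ) (μm μp : ℝ) (hμm : 0 < μm) (hμp : 0 < μp)
    (a zj b : ℝ) (haz : a < zj) (hzb : zj < b)
    (p h : ℝ → ℝ)
    (hpc : ContinuousOn p (Ioo a b))
    (hpdL : ∀ z ∈ Ioo a zj, DifferentiableAt ℝ p z)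
    (hpdR : ∀ z ∈ Ioo zj b, DifferentiableAt ℝ p z)
    (Lm Lp : ℝ)
    (hLm : Tendsto (deriv p) (𝓝[<] zj) (𝓝 Lm))
    (hLp : Tendsto (deriv p) (𝓝[>] zj) (𝓝 Lp))
    (hhint : IntegrableOn h (Ioo a b))
    (K : ℝ)
    (hF : ∀ z ∈ Ioo a b, z ≠ zj →
      (if z < zj then c * p z + μm * p z * deriv p z
        else c * p z + μp * p z * deriv p z)
        = K + ∫ ζ in z..b, h ζ)
    (hpzj : p zj ≠ 0) :
    μp * Lp = μm * Lm := by
  set a' : ℝ := (a + zj) / 2 with ha'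
  have haa' : a < a' := by simp [ha']; linarith
  have ha'z : a' < zj := by simp [ha']; linarith
  have hIcc : IntegrableOn h (Icc a' b) := by
    have h1 : IntegrableOn h (Ioo a' b) := hhint.mono_set (Ioo_subset_Ioo haa'.le le_rfl)
    have h2 : IntegrableOn h (Icc a' b) ↔ IntegrableOn h (Ioo a' b) := by
      rw [integrableOn_Icc_iff_integrableOn_Ioo]
    exact h2.mpr h1
  -- interval integrability on subintervals of [a', b]
  have hII : ∀ x ∈ Icc a' b, ∀ y ∈ Icc a' b, IntervalIntegrable h volume x y := by
    intro x hx y hy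
    exact (hIcc.mono_set (uIcc_subset_Icc hx hy)).intervalIntegrable
  -- splitting the integral
  have hsplit : ∀ z ∈ Icc a' b, (∫ ζ in z..b, h ζ) = (∫ ζ in z..zj, h ζ) + ∫ ζ in zj..b, h ζ := by
    intro z hz
    rw [intervalIntegral.integral_add_adjacent_intervals
      (hII z hz zj ⟨ha'z.le, hzb.le⟩) (hII zj ⟨ha'z.le, hzb.le⟩ b ⟨(ha'z.trans hzb).le, le_rfl⟩)]
  -- continuity of z ↦ ∫ z..zj h at zj from the left
  have hcontL : Tendsto (fun z => ∫ ζ in z..zj, h ζ) (𝓝[<] zj) (𝓝 0) := by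
    have hco : ContinuousOn (fun x => ∫ t in x..zj, h t) (uIcc a' zj) :=
      intervalIntegral.continuousOn_primitive_interval_left
        (hIcc.mono_set (by rw [uIcc_of_le ha'z.le]; exact Icc_subset_Icc le_rfl hzb.le))
    have := (hco zj (by rw [uIcc_of_le ha'z.le]; exact ⟨ha'z.le, le_rfl⟩))
    have h0 : (∫ t in zj..zj, h t) = 0 := intervalIntegral.integral_same
    have ht : Tendsto (fun x => ∫ t in x..zj, h t) (𝓝[uIcc a' zj] zj) (𝓝 0) := by
      rw [← h0]; exact this
    refine ht.mono_left ?_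
    rw [uIcc_of_le ha'z.le, ← nhdsWithin_Ioo_eq_nhdsLT ha'z]
    exact nhdsWithin_mono _ Ioo_subset_Icc_self
  -- continuity of z ↦ ∫ z..zj h at zj from the right
  have hcontR : Tendsto (fun z => ∫ ζ in z..zj, h ζ) (𝓝[>] zj) (𝓝 0) := by
    have hco : ContinuousOn (fun x => ∫ t in zj..x, h t) (uIcc zj b) :=
      intervalIntegral.continuousOn_primitive_interval
        (hIcc.mono_set (by rw [uIcc_of_le hzb.le]; exact Icc_subset_Icc ha'z.le le_rfl))
    have hcw := (hco zj (by rw [uIcc_of_le hzb.le]; exact ⟨le_rfl, hzb.le⟩))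
    have h0 : (∫ t in zj..zj, h t) = 0 := intervalIntegral.integral_same
    have ht : Tendsto (fun x => ∫ t in zj..x, h t) (𝓝[uIcc zj b] zj) (𝓝 0) := by
      rw [← h0]; exact hcw
    have ht' : Tendsto (fun x => ∫ t in zj..x, h t) (𝓝[>] zj) (𝓝 0) := by
      refine ht.mono_left ?_
      rw [uIcc_of_le hzb.le, ← nhdsWithin_Ioo_eq_nhdsGT hzb]
      exact nhdsWithin_mono _ Ioo_subset_Icc_self
    have := ht'.neg
    rw [neg_zero] at this
    refine this.congr (fun x => ?_)
    rw [← intervalIntegral.integral_symm]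
  -- RHS limit
  have hRHSL : Tendsto (fun z => K + ∫ ζ in z..b, h ζ) (𝓝[<] zj)
      (𝓝 (K + ∫ ζ in zj..b, h ζ)) := by
    have key : Tendsto (fun z => K + ((∫ ζ in z..zj, h ζ) + ∫ ζ in zj..b, h ζ)) (𝓝[<] zj)
        (𝓝 (K + (0 + ∫ ζ in zj..b, h ζ))) :=
      tendsto_const_nhds.add (hcontL.add tendsto_const_nhds)
    rw [zero_add] at key
    refine key.congr' ?_
    filter_upwards [Ioo_mem_nhdsLT_of_mem (show zj ∈ Ioc a' zj from ⟨ha'z, le_rfl⟩)] with z hz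
    rw [hsplit z ⟨hz.1.le, (hz.2.trans hzb).le⟩]
  have hRHSR : Tendsto (fun z => K + ∫ ζ in z..b, h ζ) (𝓝[>] zj)
      (𝓝 (K + ∫ ζ in zj..b, h ζ)) := by
    have key : Tendsto (fun z => K + ((∫ ζ in z..zj, h ζ) + ∫ ζ in zj..b, h ζ)) (𝓝[>] zj)
        (𝓝 (K + (0 + ∫ ζ in zj..b, h ζ))) :=
      tendsto_const_nhds.add (hcontR.add tendsto_const_nhds)
    rw [zero_add] at key
    refine key.congr' ?_
    filter_upwards [Ioo_mem_nhdsGT_of_mem (show zj ∈ Ico zj b from ⟨le_rfl, hzb⟩)] with z hz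
    rw [hsplit z ⟨(ha'z.trans hz.1).le, hz.2.le⟩]
  -- p tends to p zj from both sides
  have hpat : ContinuousAt p zj := hpc.continuousAt (Ioo_mem_nhds haz hzb)
  have hpL : Tendsto p (𝓝[<] zj) (𝓝 (p zj)) := hpat.tendsto.mono_left nhdsWithin_le_nhds
  have hpR : Tendsto p (𝓝[>] zj) (𝓝 (p zj)) := hpat.tendsto.mono_left nhdsWithin_le_nhds
  -- LHS limits
  have hLHSL : Tendsto (fun z => c * p z + μm * p z * deriv p z) (𝓝[<] zj)
      (𝓝 (c * p zj + μm * p zj * Lm)) :=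
    ((tendsto_const_nhds.mul hpL).add ((tendsto_const_nhds.mul hpL).mul hLm))
  have hLHSR : Tendsto (fun z => c * p z + μp * p z * deriv p z) (𝓝[>] zj)
      (𝓝 (c * p zj + μp * p zj * Lp)) :=
    ((tendsto_const_nhds.mul hpR).add ((tendsto_const_nhds.mul hpR).mul hLp))
  -- the two functions agree near zj
  have hEqL : Tendsto (fun z => K + ∫ ζ in z..b, h ζ) (𝓝[<] zj)
      (𝓝 (c * p zj + μm * p zj * Lm)) := by
    refine hLHSL.congr' ?_
    filter_upwards [Ioo_mem_nhdsLT_of_mem (show zj ∈ Ioc a zj from ⟨haz, le_rfl⟩)] with z hz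
    have := hF z ⟨hz.1, hz.2.trans hzb⟩ (ne_of_lt hz.2)
    rw [if_pos hz.2] at this
    exact this
  have hEqR : Tendsto (fun z => K + ∫ ζ in z..b, h ζ) (𝓝[>] zj)
      (𝓝 (c * p zj + μp * p zj * Lp)) := by
    refine hLHSR.congr' ?_
    filter_upwards [Ioo_mem_nhdsGT_of_mem (show zj ∈ Ico zj b from ⟨le_rfl, hzb⟩)] with z hz
    have := hF z ⟨haz.trans hz.1, hz.2⟩ (ne_of_gt hz.1)
    rw [if_neg (not_lt.mpr hz.1.le)] at this
    exact this
  have e1 : c * p zj + μm * p zj * Lm = K + ∫ ζ in zj..b, h ζ :=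
    tendsto_nhds_unique hEqL hRHSL
  have e2 : c * p zj + μp * p zj * Lp = K + ∫ ζ in zj..b, h ζ :=
    tendsto_nhds_unique hEqR hRHSR
  have e3 : μm * p zj * Lm = μp * p zj * Lp := by linarith
  have : (μp * Lp) * p zj = (μm * Lm) * p zj := by linarith [e3]
  exact mul_right_cancel₀ hpzj this
end

section
/- Let I ≥ 2 be an integer, c > 0, and 0 < μ_1 < μ_2 < ... < μ_I. Let 0 = z_1 < z_2 < ... < z_I and let p be continuous and positive on (−∞, z_I), differentiable on (−∞, 0) and on each open interval (z_i, z_{i+1}) for i = 1, ..., I−1, with finite one-sided derivative limits p'(z_i^−) and p'(z_i^+) at each z_i, i = 1, ..., I−1. Assume: (i) p(a)(c + μ_{i+1} p'(a⁺)) = p(b)(c + μ_{i+1} p'(b⁻)) whenever (a, b) = (z_i, z_{i+1}) for i = 1, ..., I−2 (the integrated flux relation with h ≡ 0); (ii) the jump conditions μ_{i+1} p'(z_i^+) = μ_i p'(z_i^−) hold for i = 1, ..., I−1; and (iii) p'(z) = −c/μ_I for all z ∈ (z_{I−1}, z_I). Then −μ_{i+1} p'(z_i^+) = −μ_i p'(z_i^−)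 = c for every i = 1, ..., I−1. -/
open Set Filter Topology

/-- Backward induction establishing the kink conditions
`−μ_{i+1} p'(z_i⁺) = −μ_i p'(z_i⁻) = c` at all interface points
`z_1 = 0, …, z_{I−1}` from the known slope `−c/μ_I` on the last interval,
the flux jump conditions, and the integrated flux identities with `h ≡ 0`
on the intermediate intervals. -/
theorem stmt6
    (I : ℕ) (hI : 2 ≤ I)
    (c : ℝ) (hc : 0 < c)
    (μ : ℕ → ℝ) (hμ1 : 0 < μ 1)
    (hμmono : ∀ i, 1 ≤ i → i < I → μ i < μ (i + 1))
    (z : ℕ → ℝ) (hz1 : z 1 = 0)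
    (hzmono : ∀ i, 1 ≤ i → i < I → z i < z (i + 1))
    (p : ℝ → ℝ)
    (hpc : ContinuousOn p (Iio (z I)))
    (hppos : ∀ x ∈ Iio (z I), 0 < p x)
    (hpd0 : ∀ x ∈ Iio (0 : ℝ), DifferentiableAt ℝ p x)
    (hpd : ∀ i, 1 ≤ i → i ≤ I - 1 →
      ∀ x ∈ Ioo (z i) (z (i + 1)), DifferentiableAt ℝ p x)
    (L R : ℕ → ℝ)
    (hL : ∀ i, 1 ≤ i → i ≤ I - 1 → Tendsto (deriv p) (𝓝[<] (z i)) (𝓝 (L i)))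
    (hR : ∀ i, 1 ≤ i → i ≤ I - 1 → Tendsto (deriv p) (𝓝[>] (z i)) (𝓝 (R i)))
    -- (i) integrated flux relation with h ≡ 0 on the intermediate intervals
    (hflux : ∀ i, 1 ≤ i → i ≤ I - 2 →
      p (z i) * (c + μ (i + 1) * R i) = p (z (i + 1)) * (c + μ (i + 1) * L (i + 1)))
    -- (ii) flux jump conditions at the interfaces
    (hjump : ∀ i, 1 ≤ i → i ≤ I - 1 → μ (i + 1) * R i = μ i * L i)
    -- (iii) known slope on the last interval
    (hlast : ∀ x ∈ Ioo (z (I - 1)) (z I), deriv p x = -(c / μ I)) :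
    ∀ i, 1 ≤ i → i ≤ I - 1 →
      -(μ (i + 1) * R i) = c ∧ -(μ i * L i) = c := by
  have hμpos : ∀ i, 1 ≤ i → i ≤ I → 0 < μ i := by
    intro i
    induction i with
    | zero => intro h; omega
    | succ n ih =>
      intro _ hiI
      rcases Nat.eq_zero_or_pos n with h | h
      · subst h; exact hμ1
      · exact lt_trans (ih h (by omega)) (hμmono n h (by omega))
  have hzlt : ∀ i j, 1 ≤ i → i < j → j ≤ I → z i < z j := by
    intro i j
    induction j with
    | zero => omega
    | succ n ih =>
      intro hi1 hij hjI
      rcases Nat.lt_or_ge i n with h | h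
      · exact lt_trans (ih hi1 h (by omega)) (hzmono n (by omega) (by omega))
      · have : i = n := by omega
        subst this
        exact hzmono i hi1 (by omega)
  have hRbase : R (I - 1) = -(c / μ I) := by
    have h1 : z (I - 1) < z I := hzlt (I - 1) I (by omega) (by omega) le_rfl
    have hmem : Ioo (z (I - 1)) (z I) ∈ 𝓝[>] (z (I - 1)) :=
      Ioo_mem_nhdsGT_of_mem ⟨le_rfl, h1⟩
    have h2 : Tendsto (deriv p) (𝓝[>] (z (I - 1))) (𝓝 (-(c / μ I))) := by
      refine Tendsto.congr' ?_ tendsto_const_nhds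
      filter_upwards [hmem] with x hx
      exact (hlast x hx).symm
    exact tendsto_nhds_unique (hR (I - 1) (by omega) le_rfl) h2
  have key : ∀ d i, 1 ≤ i → i + d = I - 1 →
      -(μ (i + 1) * R i) = c ∧ -(μ i * L i) = c := by
    intro d
    induction d with
    | zero =>
      intro i hi1 hieq
      have hi : i = I - 1 := by omega
      subst hi
      have hI1 : (I - 1) + 1 = I := by omega
      have hμI : 0 < μ I := hμpos I (by omega) le_rfl
      have hR1 : -(μ ((I - 1) + 1) * R (I - 1)) = c := by
        rw [hI1, hRbase]
        field_simp
      refine ⟨hR1, ?_⟩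
      rw [← hjump (I - 1) (by omega) le_rfl]
      exact hR1
    | succ d ih =>
      intro i hi1 hieq
      obtain ⟨h1, h2⟩ := ih (i + 1) (by omega) (by omega)
      have hzi : z i < z I := hzlt i I hi1 (by omega) le_rfl
      have hp : 0 < p (z i) := hppos _ hzi
      have hf := hflux i hi1 (by omega)
      have hz0 : c + μ (i + 1) * L (i + 1) = 0 := by linarith
      rw [hz0, mul_zero] at hf
      have h3 : c + μ (i + 1) * R i = 0 := by
        rcases mul_eq_zero.mp hf with h | h
        · linarith
        · exact h
      have hR1 : -(μ (i + 1) * R i) = c := by linarith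
      refine ⟨hR1, ?_⟩
      rw [← hjump i hi1 (by omega)]
      exact hR1
  intro i hi1 hiI
  exact key (I - 1 - i) i hi1 (by omega)
end

section
/- Let I ≥ 2 be an integer, c > 0, and ω_i, μ_i, M_i > 0 for i = 2, ..., I. Let 0 = z_1 < z_2 < ... < z_I and let p : [0, z_I] → ℝ be continuous with p(z_I) = 0, such that on each interval [z_{i−1}, z_i] for i = 2, ..., I the function p is affine with slope −c/μ_i, and ∫_{z_{i−1}}^{z_i} p(z) dz = ω_i M_i for i = 2, ..., I. Then p(z_i) = sqrt(2 c Σ_{j=i+1}^I (ω_j/μ_j) M_j) for every i = 1, ..., I−1; in particular p(0) = sqrt(2 c Σ_{j=2}^I (ω_j/μ_j) M_j). -/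
/-!
On a segment `[a, b]` where `p x = p b + k (b - x)`, the mass is
`p b (b - a) + k (b - a)² / 2`, so `p a² = (p b + k (b - a))² = p b² + 2 k ∫ p`.
Summing these identities backwards from `p (z_I) = 0` gives `p (z_i)²`, and `p (z_i) ≥ 0`
because the slopes `-c/μ_j` are negative.
-/

open Set

theorem integral_const_add_mul_sub (a b q k : ℝ) :
    ∫ x in a..b, (q + k * (b - x)) = q * (b - a) + k * (b - a) ^ 2 / 2 := by
  have hlin : (fun x : ℝ => q + k * (b - x)) = fun x => (q + k * b) - k * x := by
    funext x; ring
  have hint : IntervalIntegrable (fun x : ℝ => k * x) MeasureTheory.volume a b :=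
    (continuous_const.mul continuous_id).intervalIntegrable a b
  rw [hlin, intervalIntegral.integral_sub intervalIntegrable_const hint,
    intervalIntegral.integral_const, intervalIntegral.integral_const_mul, integral_id,
    smul_eq_mul]
  ring

theorem sq_eq_sq_add_two_mul_integral_of_affine {f : ℝ → ℝ} {a b k : ℝ} (hab : a ≤ b)
    (hf : ∀ x ∈ Icc a b, f x = f b + k * (b - x)) :
    f a ^ 2 = f b ^ 2 + 2 * k * ∫ x in a..b, f x := by
  have hint : ∫ x in a..b, f x = ∫ x in a..b, (f b + k * (b - x)) :=
    intervalIntegral.integral_congr fun x hx => hf x (by rwa [uIcc_of_le hab] at hx)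
  rw [hint, integral_const_add_mul_sub, hf a ⟨le_rfl, hab⟩]
  ring

theorem eq_sqrt_sum_of_sq_eq_sq_add {v s : ℕ → ℝ} {m n : ℕ} (hn : v n = 0)
    (hanti : ∀ i, m ≤ i → i < n → v (i + 1) ≤ v i)
    (hsq : ∀ i, m ≤ i → i < n → v i ^ 2 = v (i + 1) ^ 2 + s (i + 1)) {i : ℕ}
    (hmi : m ≤ i) (hin : i ≤ n) :
    v i = √(∑ j ∈ Finset.Icc (i + 1) n, s j) := by
  suffices h : 0 ≤ v i ∧ v i ^ 2 = ∑ j ∈ Finset.Icc (i + 1) n, s j by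
    rw [← h.2, Real.sqrt_sq h.1]
  induction hin using Nat.decreasingInduction with
  | self => simp [hn]
  | of_succ k hkn ih =>
    obtain ⟨hnonneg, hsum⟩ := ih (by omega)
    refine ⟨hnonneg.trans (hanti k hmi hkn), ?_⟩
    rw [hsq k hmi hkn, hsum, ← Finset.insert_Icc_add_one_left_eq_Icc (by omega : k + 1 ≤ n),
      Finset.sum_insert (by simp)]
    ring

theorem stmt9_general
    (I : ℕ) (hI : 2 ≤ I)
    (c : ℝ) (hc : 0 < c)
    (ω μ M : ℕ → ℝ)
    (hμ : ∀ i, 2 ≤ i → i ≤ I → 0 < μ i)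
    (z : ℕ → ℝ) (hz1 : z 1 = 0)
    (hzmono : ∀ i, 1 ≤ i → i < I → z i < z (i + 1))
    (p : ℝ → ℝ)
    (hpzI : p (z I) = 0)
    (haff : ∀ i, 2 ≤ i → i ≤ I →
      ∀ x ∈ Icc (z (i - 1)) (z i), p x = p (z i) + c / μ i * (z i - x))
    (hmass : ∀ i, 2 ≤ i → i ≤ I →
      ∫ x in (z (i - 1))..(z i), p x = ω i * M i) :
    (∀ i, 1 ≤ i → i ≤ I - 1 →
      p (z i) = Real.sqrt (2 * c * ∑ j ∈ Finset.Icc (i + 1) I, ω j / μ j * M j)) ∧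
    p 0 = Real.sqrt (2 * c * ∑ j ∈ Finset.Icc 2 I, ω j / μ j * M j) := by
  have haff' : ∀ i, 1 ≤ i → i < I →
      ∀ x ∈ Icc (z i) (z (i + 1)), p x = p (z (i + 1)) + c / μ (i + 1) * (z (i + 1) - x) :=
    fun i hi hiI => by simpa using haff (i + 1) (by omega) (by omega)
  have hanti : ∀ i, 1 ≤ i → i < I → p (z (i + 1)) ≤ p (z i) := fun i hi hiI => by
    rw [haff' i hi hiI (z i) ⟨le_rfl, (hzmono i hi hiI).le⟩]
    have := div_nonneg hc.le (hμ (i + 1) (by omega) (by omega)).le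
    nlinarith [hzmono i hi hiI]
  have hsq : ∀ i, 1 ≤ i → i < I →
      p (z i) ^ 2 = p (z (i + 1)) ^ 2 + 2 * c * (ω (i + 1) / μ (i + 1) * M (i + 1)) :=
    fun i hi hiI => by
      have hmass' := hmass (i + 1) (by omega) (by omega)
      rw [Nat.add_sub_cancel] at hmass'
      rw [sq_eq_sq_add_two_mul_integral_of_affine (hzmono i hi hiI).le (haff' i hi hiI), hmass']
      ring
  have hvalue : ∀ i, 1 ≤ i → i ≤ I - 1 →
      p (z i) = Real.sqrt (2 * c * ∑ j ∈ Finset.Icc (i + 1) I, ω j / μ j * M j) :=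
    fun i hi hiI => by
      rw [Finset.mul_sum]
      exact eq_sqrt_sum_of_sq_eq_sq_add (v := fun i => p (z i)) (n := I) hpzI hanti hsq hi (by omega)
  exact ⟨hvalue, hz1 ▸ hvalue 1 le_rfl (by omega)⟩

/-- For the piecewise-affine travelling-wave pressure ahead of
the proliferating region — continuous, with slope `−c/μ_i` on `[z_{i−1}, z_i]`,
vanishing at the front edge `z_I`, and carrying mass `ω_i M_i` on the `i`-th
segment — the interface values are
`p(z_i) = sqrt(2 c Σ_{j=i+1}^I (ω_j/μ_j) M_j)`. -/
theorem stmt9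
    (I : ℕ) (hI : 2 ≤ I)
    (c : ℝ) (hc : 0 < c)
    (ω μ M : ℕ → ℝ)
    (hω : ∀ i, 2 ≤ i → i ≤ I → 0 < ω i)
    (hμ : ∀ i, 2 ≤ i → i ≤ I → 0 < μ i)
    (hM : ∀ i, 2 ≤ i → i ≤ I → 0 < M i)
    (z : ℕ → ℝ) (hz1 : z 1 = 0)
    (hzmono : ∀ i, 1 ≤ i → i < I → z i < z (i + 1))
    (p : ℝ → ℝ)
    (hpc : ContinuousOn p (Icc 0 (z I)))
    (hpzI : p (z I) = 0)
    (haff : ∀ i, 2 ≤ i → i ≤ I →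
      ∀ x ∈ Icc (z (i - 1)) (z i), p x = p (z i) + c / μ i * (z i - x))
    (hmass : ∀ i, 2 ≤ i → i ≤ I →
      ∫ x in (z (i - 1))..(z i), p x = ω i * M i) :
    (∀ i, 1 ≤ i → i ≤ I - 1 →
      p (z i) = Real.sqrt (2 * c * ∑ j ∈ Finset.Icc (i + 1) I, ω j / μ j * M j)) ∧
    p 0 = Real.sqrt (2 * c * ∑ j ∈ Finset.Icc 2 I, ω j / μ j * M j) :=
  stmt9_general I hI c hc ω μ M hμ z hz1 hzmono p hpzI haff hmass
end
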